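/- arXiv:2012.12159 — 3 statements merged into one kernel-verified Lean document; each statement's English description precedes it below -/
import Mathlib

section
/- For a convex body K ⊂ R^n, the function z ↦ |K^z| (the volume of the polar dual of K with respect to center z) is strictly convex on the interior of K. -/
open MeasureTheory Set Real Module
open scoped InnerProductSpace Pointwise Nat

/-!
With `h_K` the support function of `K`, the function `g_z = h_K - ⟪·, z⟫` is, for `z ∈ int K`,
nonnegative and positively homogeneous, and its sublevel set `{g_z ≤ 1}` is `K^z`. Integrating
`exp (-g_z)` along the level sets gives `∫ exp (⟪ξ, z⟫ - h_K ξ) dξ = n! |K^z|`. For fixed `ξ` the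
integrand is the exponential of an affine function of `z`, so it is convex in `z`, and strictly
convex along a segment `[x, y]` unless `⟪ξ, x - y⟫ = 0`; that hyperplane is Lebesgue-null, so the
integral, hence `|K^z|`, is strictly convex.
-/

lemma ofReal_exp_neg_eq_setLIntegral_Ici (c : ℝ) :
    ENNReal.ofReal (exp (-c)) = ∫⁻ s in Ici c, ENNReal.ofReal (exp (-s)) := by
  rw [← setLIntegral_congr Ioi_ae_eq_Ici, ← ofReal_integral_eq_lintegral_ofReal
    (integrableOn_exp_neg_Ioi c) (.of_forall fun s => (exp_pos _).le), integral_exp_neg_Ioi]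

lemma setLIntegral_Ioi_pow_mul_exp_neg (d : ℕ) :
    ∫⁻ s in Ioi 0, ENNReal.ofReal (s ^ d) * ENNReal.ofReal (exp (-s)) = d ! := by
  have hGamma : ∫ s in Ioi (0 : ℝ), s ^ d * exp (-s) = d ! := by
    have := integral_rpow_mul_exp_neg_mul_Ioi (a := d + 1) (r := 1) (by positivity) one_pos
    simpa [Gamma_nat_eq_factorial] using this
  have hint : IntegrableOn (fun s : ℝ => s ^ d * exp (-s)) (Ioi 0) :=
    Integrable.of_integral_ne_zero (by rw [hGamma]; positivity)
  rw [← ENNReal.ofReal_natCast, ← hGamma, ofReal_integral_eq_lintegral_ofReal hint]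
  · refine setLIntegral_congr_fun measurableSet_Ioi fun s hs => ?_
    rw [ENNReal.ofReal_mul (pow_nonneg hs.le d)]
  · filter_upwards [ae_restrict_mem measurableSet_Ioi] with s hs
    exact mul_nonneg (pow_nonneg hs.le d) (exp_pos _).le

lemma setOf_le_eq_smul {E : Type*} [AddCommGroup E] [Module ℝ E] {g : E → ℝ}
    (hg : ∀ c : ℝ, 0 < c → ∀ ξ, g (c • ξ) = c * g ξ) {s : ℝ} (hs : 0 < s) :
    {ξ | g ξ ≤ s} = s • {ξ | g ξ ≤ 1} := by
  ext ξ
  rw [mem_smul_set_iff_inv_smul_mem₀ hs.ne', mem_ofPred_eq, mem_ofPred_eq, hg _ (inv_pos.2 hs),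
    inv_mul_le_one₀ hs]

section Homogeneous

variable {E : Type*} [NormedAddCommGroup E] [NormedSpace ℝ E] [FiniteDimensional ℝ E]
  [MeasurableSpace E] [BorelSpace E] (μ : Measure E) [μ.IsAddHaarMeasure]
  {g : E → ℝ}

lemma addHaar_setOf_le_eq_mul (hg : ∀ c : ℝ, 0 < c → ∀ ξ, g (c • ξ) = c * g ξ) {s : ℝ}
    (hs : 0 < s) :
    μ {ξ | g ξ ≤ s} = ENNReal.ofReal (s ^ finrank ℝ E) * μ {ξ | g ξ ≤ 1} := by
  rw [setOf_le_eq_smul hg hs, Measure.addHaar_smul, abs_of_pos (pow_pos hs _)]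

theorem lintegral_exp_neg_eq_factorial_mul_measure (hmeas : Measurable g) (hg0 : ∀ ξ, 0 ≤ g ξ)
    (hg : ∀ c : ℝ, 0 < c → ∀ ξ, g (c • ξ) = c * g ξ) :
    ∫⁻ ξ, ENNReal.ofReal (exp (-g ξ)) ∂μ = (finrank ℝ E)! * μ {ξ | g ξ ≤ 1} := by
  -- Tonelli applied to `exp (-g ξ) = ∫ s in Ici (g ξ), exp (-s)`.
  set F : E × ℝ → ENNReal :=
    {p : E × ℝ | g p.1 ≤ p.2}.indicator fun p => ENNReal.ofReal (exp (-p.2))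
  have hF : Measurable F :=
    (measurable_snd.neg.exp.ennreal_ofReal).indicator
      (measurableSet_le (hmeas.comp measurable_fst) measurable_snd)
  calc ∫⁻ ξ, ENNReal.ofReal (exp (-g ξ)) ∂μ
      = ∫⁻ ξ, (∫⁻ s, F (ξ, s)) ∂μ := by
        refine lintegral_congr fun ξ => ?_
        rw [ofReal_exp_neg_eq_setLIntegral_Ici, ← lintegral_indicator measurableSet_Ici]
        rfl
    _ = ∫⁻ s, ∫⁻ ξ, F (ξ, s) ∂μ :=
        lintegral_lintegral_swap (f := fun ξ s => F (ξ, s)) hF.aemeasurable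
    _ = ∫⁻ s, ENNReal.ofReal (exp (-s)) * μ {ξ | g ξ ≤ s} := by
        refine lintegral_congr fun s => ?_
        rw [← lintegral_indicator_const (measurableSet_le hmeas measurable_const)]
        rfl
    _ = ∫⁻ s in Ioi 0, ENNReal.ofReal (exp (-s)) * μ {ξ | g ξ ≤ s} := by
        rw [setLIntegral_congr Ioi_ae_eq_Ici, setLIntegral_eq_of_support_subset]
        intro s hs
        by_contra hneg
        have hempty : {ξ | g ξ ≤ s} = ∅ :=
          eq_empty_of_forall_notMem fun ξ hξ => hneg (le_trans (hg0 ξ) hξ)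
        simp [hempty] at hs
    _ = ∫⁻ s in Ioi 0, ENNReal.ofReal (s ^ finrank ℝ E) * ENNReal.ofReal (exp (-s))
          * μ {ξ | g ξ ≤ 1} := by
        refine setLIntegral_congr_fun measurableSet_Ioi fun s hs => ?_
        rw [addHaar_setOf_le_eq_mul μ hg hs]
        ring
    _ = (finrank ℝ E)! * μ {ξ | g ξ ≤ 1} := by
        rw [lintegral_mul_const _ (by fun_prop), setLIntegral_Ioi_pow_mul_exp_neg]

end Homogeneous

variable {E : Type*} [NormedAddCommGroup E] [InnerProductSpace ℝ E]

noncomputable def supportFunction (K : Set E) (ξ : E) : ℝ :=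
  sSup ((fun x => ⟪ξ, x⟫_ℝ) '' K)

def polarAt (K : Set E) (z : E) : Set E :=
  {ξ | ∀ x ∈ K, ⟪ξ, x - z⟫_ℝ ≤ 1}

namespace supportFunction

variable {K : Set E}

lemma inner_le (hK : IsCompact K) {x : E} (hx : x ∈ K) (ξ : E) :
    ⟪ξ, x⟫_ℝ ≤ supportFunction K ξ :=
  le_csSup (hK.image (continuous_const.inner continuous_id)).bddAbove (mem_image_of_mem _ hx)

lemma continuous (hK : IsCompact K) : Continuous (supportFunction K) :=
  hK.continuous_sSup (continuous_fst.inner continuous_snd)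

lemma smul (ξ : E) {c : ℝ} (hc : 0 ≤ c) :
    supportFunction K (c • ξ) = c * supportFunction K ξ := by
  have himage : (fun x => ⟪c • ξ, x⟫_ℝ) '' K = c • (fun x => ⟪ξ, x⟫_ℝ) '' K := by
    rw [← image_smul, image_image]
    simp_rw [real_inner_smul_left, smul_eq_mul]
  rw [supportFunction, himage, Real.sSup_smul_of_nonneg hc, smul_eq_mul, supportFunction]

lemma sub_inner_le_one_iff_mem_polarAt (hK : IsCompact K) (hne : K.Nonempty) (z ξ : E) :
    supportFunction K ξ - ⟪ξ, z⟫_ℝ ≤ 1 ↔ ξ ∈ polarAt K z := by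
  rw [sub_le_iff_le_add, supportFunction,
    csSup_le_iff (hK.image (continuous_const.inner continuous_id)).bddAbove (hne.image _),
    forall_mem_image]
  simp only [polarAt, mem_ofPred_eq, inner_sub_right, sub_le_iff_le_add', add_comm]

end supportFunction

lemma polarAt_subset_closedBall {K : Set E} {z : E} {r : ℝ} (hr : 0 < r)
    (hball : Metric.closedBall z r ⊆ K) : polarAt K z ⊆ Metric.closedBall 0 r⁻¹ := by
  intro ξ hξ
  rw [mem_closedBall_zero_iff, ← mul_one r⁻¹, le_inv_mul_iff₀ hr]
  rcases eq_or_ne ξ 0 with rfl | hξ0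
  · simp
  have hnorm : 0 < ‖ξ‖ := norm_pos_iff.2 hξ0
  have hx : z + (r / ‖ξ‖) • ξ ∈ K := hball <| by
    rw [Metric.mem_closedBall, dist_eq_norm, add_sub_cancel_left, norm_smul, norm_div,
      norm_norm, Real.norm_of_nonneg hr.le, div_mul_cancel₀ _ hnorm.ne']
  have := hξ _ hx
  rw [add_sub_cancel_left, real_inner_smul_right, real_inner_self_eq_norm_sq] at this
  calc r * ‖ξ‖ = r / ‖ξ‖ * ‖ξ‖ ^ 2 := by field_simp
    _ ≤ 1 := this

lemma continuous_exp_inner_sub_supportFunction {K : Set E} (hK : IsCompact K) (z : E) :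
    Continuous fun ξ => exp (⟪ξ, z⟫_ℝ - supportFunction K ξ) :=
  ((continuous_id.inner continuous_const).sub (supportFunction.continuous hK)).rexp

lemma measure_polarAt_lt_top [ProperSpace E] [MeasurableSpace E] (μ : Measure E)
    [IsFiniteMeasureOnCompacts μ] {K : Set E} {z : E} (hz : z ∈ interior K) :
    μ (polarAt K z) < ⊤ := by
  obtain ⟨r, hr, hball⟩ := Metric.nhds_basis_closedBall.mem_iff.1 (mem_interior_iff_mem_nhds.1 hz)
  exact (measure_mono (polarAt_subset_closedBall hr hball)).trans_lt measure_closedBall_lt_top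

section Integrals

variable [FiniteDimensional ℝ E] [MeasurableSpace E] [BorelSpace E]
  (μ : Measure E) [μ.IsAddHaarMeasure] {K : Set E}

theorem lintegral_exp_inner_sub_supportFunction (hK : IsCompact K) {z : E} (hz : z ∈ K) :
    ∫⁻ ξ, ENNReal.ofReal (exp (⟪ξ, z⟫_ℝ - supportFunction K ξ)) ∂μ =
      (finrank ℝ E)! * μ (polarAt K z) := by
  have hpolar : {ξ | supportFunction K ξ - ⟪ξ, z⟫_ℝ ≤ 1} = polarAt K z :=
    ext (supportFunction.sub_inner_le_one_iff_mem_polarAt hK ⟨z, hz⟩ z)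
  rw [← hpolar, ← lintegral_exp_neg_eq_factorial_mul_measure μ
    (g := fun ξ => supportFunction K ξ - ⟪ξ, z⟫_ℝ)
    ((supportFunction.continuous hK).sub (continuous_id.inner continuous_const)).measurable
    (fun ξ => sub_nonneg.2 (supportFunction.inner_le hK hz ξ))
    (fun c hc ξ => by rw [supportFunction.smul ξ hc.le, real_inner_smul_left, mul_sub])]
  simp_rw [neg_sub]

lemma integrable_exp_inner_sub_supportFunction (hK : IsCompact K) {z : E} (hz : z ∈ interior K) :
    Integrable (fun ξ => exp (⟪ξ, z⟫_ℝ - supportFunction K ξ)) μ := by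
  refine ⟨?_, ?_⟩
  · exact (continuous_exp_inner_sub_supportFunction hK z).aestronglyMeasurable
  · rw [hasFiniteIntegral_iff_ofReal (.of_forall fun ξ => (exp_pos _).le),
      lintegral_exp_inner_sub_supportFunction μ hK (interior_subset hz)]
    exact ENNReal.mul_lt_top (ENNReal.natCast_lt_top _) (measure_polarAt_lt_top μ hz)

lemma integral_exp_inner_sub_supportFunction (hK : IsCompact K) {z : E} (hz : z ∈ K) :
    ∫ ξ, exp (⟪ξ, z⟫_ℝ - supportFunction K ξ) ∂μ = (finrank ℝ E)! * (μ (polarAt K z)).toReal := by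
  rw [integral_eq_lintegral_of_nonneg_ae (.of_forall fun ξ => (exp_pos _).le)
      (continuous_exp_inner_sub_supportFunction hK z).aestronglyMeasurable,
    lintegral_exp_inner_sub_supportFunction μ hK hz, ENNReal.toReal_mul, ENNReal.toReal_natCast]

end Integrals

lemma integral_pos_of_ae_pos {α : Type*} [MeasurableSpace α] {μ : Measure α} [NeZero μ] {f : α → ℝ}
    (hf : ∀ᵐ x ∂μ, 0 < f x) (hfi : Integrable f μ) : 0 < ∫ x, f x ∂μ := by
  rw [integral_pos_iff_support_of_nonneg_ae (hf.mono fun _ hx => hx.le) hfi]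
  have hsupport : Function.support f =ᵐ[μ] Set.univ :=
    ae_eq_univ.2 (measure_mono_null (fun x hx => fun hpos => hx hpos.ne') (ae_iff.1 hf))
  rw [measure_congr hsupport]
  exact Measure.measure_univ_pos.2 (NeZero.ne μ)

lemma StrictConvexOn.const_mul {E : Type*} [AddCommGroup E] [Module ℝ E] {s : Set E} {f : E → ℝ}
    (hf : StrictConvexOn ℝ s f) {c : ℝ} (hc : 0 < c) : StrictConvexOn ℝ s fun x => c * f x := by
  refine ⟨hf.1, fun x hx y hy hxy a b ha hb hab => ?_⟩
  have := mul_lt_mul_of_pos_left (hf.2 hx hy hxy ha hb hab) hc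
  simp only [smul_eq_mul] at this ⊢
  linarith

section StrictConvexity

variable [FiniteDimensional ℝ E] [MeasurableSpace E] [BorelSpace E]
  (μ : Measure E) [μ.IsAddHaarMeasure]

lemma ae_inner_ne_zero {v : E} (hv : v ≠ 0) : ∀ᵐ ξ ∂μ, ⟪ξ, v⟫_ℝ ≠ 0 := by
  have hperp : {ξ | ¬⟪ξ, v⟫_ℝ ≠ 0} = ((ℝ ∙ v)ᗮ : Submodule ℝ E) := by
    ext ξ
    rw [SetLike.mem_coe, Submodule.mem_orthogonal_singleton_iff_inner_right, real_inner_comm,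
      Set.mem_ofPred_eq, not_not]
  rw [ae_iff, hperp]
  refine Measure.addHaar_submodule μ _ fun htop => hv ?_
  have hv' : v ∈ (ℝ ∙ v)ᗮ := htop ▸ Submodule.mem_top
  exact inner_self_eq_zero.1 (Submodule.mem_orthogonal_singleton_iff_inner_right.1 hv')

theorem strictConvexOn_integral_exp_inner_sub {s : Set E} (hs : Convex ℝ s) (h : E → ℝ)
    (hint : ∀ z ∈ s, Integrable (fun ξ => exp (⟪ξ, z⟫_ℝ - h ξ)) μ) :
    StrictConvexOn ℝ s fun z => ∫ ξ, exp (⟪ξ, z⟫_ℝ - h ξ) ∂μ := by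
  refine ⟨hs, fun x hx y hy hxy a b ha hb hab => ?_⟩
  set u : E → ℝ := fun ξ => ⟪ξ, x⟫_ℝ - h ξ
  set v : E → ℝ := fun ξ => ⟪ξ, y⟫_ℝ - h ξ
  have hcombo : ∀ ξ, ⟪ξ, a • x + b • y⟫_ℝ - h ξ = a * u ξ + b * v ξ := fun ξ => by
    simp only [u, v, inner_add_right, real_inner_smul_right]
    linear_combination (h ξ) * hab
  have hint_x : Integrable (fun ξ => a * exp (u ξ)) μ := (hint x hx).const_mul a
  have hint_y : Integrable (fun ξ => b * exp (v ξ)) μ := (hint y hy).const_mul b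
  have hint_sum : Integrable (fun ξ => a * exp (u ξ) + b * exp (v ξ)) μ := hint_x.add hint_y
  have hint_xy : Integrable (fun ξ => exp (a * u ξ + b * v ξ)) μ := by
    simpa only [hcombo] using hint _ (hs hx hy ha.le hb.le hab)
  have hgap : ∀ᵐ ξ ∂μ, 0 < a * exp (u ξ) + b * exp (v ξ) - exp (a * u ξ + b * v ξ) := by
    filter_upwards [ae_inner_ne_zero μ (sub_ne_zero.2 hxy)] with ξ hξ
    have huv : u ξ ≠ v ξ := fun huv => hξ <| by
      simp only [u, v] at huv
      rw [inner_sub_right]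
      linarith
    simpa only [smul_eq_mul, sub_pos] using
      strictConvexOn_exp.2 (mem_univ (u ξ)) (mem_univ (v ξ)) huv ha hb hab
  have hpos := integral_pos_of_ae_pos hgap (hint_sum.sub hint_xy)
  rw [integral_sub hint_sum hint_xy, integral_add hint_x hint_y, integral_const_mul,
    integral_const_mul] at hpos
  show ∫ ξ, exp (⟪ξ, a • x + b • y⟫_ℝ - h ξ) ∂μ < a * ∫ ξ, exp (u ξ) ∂μ + b * ∫ ξ, exp (v ξ) ∂μ
  simp only [hcombo]
  linarith

end StrictConvexity

theorem dual_volume_strictConvexOn_general {n : ℕ} (K : Set (EuclideanSpace ℝ (Fin n)))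
    (hKconv : Convex ℝ K) (hKcomp : IsCompact K) :
    StrictConvexOn ℝ (interior K)
      (fun z => (MeasureTheory.volume
        {ξ : EuclideanSpace ℝ (Fin n) | ∀ x ∈ K, ⟪ξ, x - z⟫_ℝ ≤ 1}).toReal) := by
  have hF := strictConvexOn_integral_exp_inner_sub volume hKconv.interior (supportFunction K)
    fun z hz => integrable_exp_inner_sub_supportFunction volume hKcomp hz
  refine (hF.const_mul (inv_pos.2 (Nat.cast_pos.2 (Nat.factorial_pos n)))).congr fun z hz => ?_
  beta_reduce
  rw [integral_exp_inner_sub_supportFunction volume hKcomp (interior_subset hz),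
    finrank_euclideanSpace_fin, inv_mul_cancel_left₀ (by positivity)]
  rfl

/-- For a convex body `K ⊂ ℝⁿ`, the function `z ↦ |K^z|`, the volume of the polar dual
`K^z = {ξ : ⟨ξ, x - z⟩ ≤ 1 ∀ x ∈ K}` of `K` with respect to the center `z`,
is strictly convex on the interior of `K`. -/
theorem dual_volume_strictConvexOn {n : ℕ} (K : Set (EuclideanSpace ℝ (Fin n)))
    (hKconv : Convex ℝ K) (hKcomp : IsCompact K) (hKint : (interior K).Nonempty) :
    StrictConvexOn ℝ (interior K)
      (fun z => (MeasureTheory.volume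
        {ξ : EuclideanSpace ℝ (Fin n) | ∀ x ∈ K, ⟪ξ, x - z⟫_ℝ ≤ 1}).toReal) :=
  dual_volume_strictConvexOn_general K hKconv hKcomp
end

section
/- Let A be a positive-definite n×n matrix and Q_A = {x ∈ R^n : ⟨Ax,x⟩ ≤ 1}. Then for p ∈ ∂Q_A and 0 < ρ < 1, the volume of the dual body with respect to the point ρp satisfies |Q_A^{ρp}| = ω_n (det A)^{1/2} / (1−ρ²)^{(n+1)/2}, where ω_n is the volume of the Euclidean unit ball. -/
/-!
Write `A = Bᴴ B` with `B` invertible, so that `Q_A = B⁻¹(ball)` and `√(det A) = |det B|`.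
Polarity turns linear maps into adjoints: the polar body of `Q_A` with respect to `z` is the image
under `Bᴴ` of the polar body of the closed unit ball with respect to `B z = ρ u`, `‖u‖ = 1`. The
latter is `{η | ‖η‖ ≤ 1 + ρ ⟪η, u⟫}`, an ellipsoid: with `s = √(1 - ρ²)`, translating it by
`-(ρ / s²) u` gives the preimage of the ball of radius `s⁻¹` under the stretch by the factor `s`
along `u`, whose determinant is `s`. Its volume is therefore `ω_n / s^(n+1)`.
-/

open InnerProductSpace Metric MeasureTheory Matrix

theorem det_one_add_rankOne {𝕜 E : Type*} [RCLike 𝕜] [NormedAddCommGroup E]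
    [InnerProductSpace 𝕜 E] [FiniteDimensional 𝕜 E] (x y : E) :
    LinearMap.det ((1 + rankOne 𝕜 x y : E →L[𝕜] E) : E →ₗ[𝕜] E) = 1 + ⟪y, x⟫_𝕜 := by
  classical
  let b := stdOrthonormalBasis 𝕜 E
  rw [← LinearMap.det_toMatrix b.toBasis, ContinuousLinearMap.toLinearMap_add, map_add,
    ContinuousLinearMap.toLinearMap_one, LinearMap.toMatrix_one, toMatrix_rankOne,
    Matrix.vecMulVec_eq Unit, Matrix.det_one_add_replicateCol_mul_replicateRow,
    ← b.repr.inner_map_map y x, PiLp.inner_apply]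
  simp [dotProduct, mul_comm]

section

variable {E : Type*} [NormedAddCommGroup E] [InnerProductSpace ℝ E]

noncomputable def stretchAlong (u : E) (s : ℝ) : E →L[ℝ] E := 1 + rankOne ℝ ((s - 1) • u) u

theorem stretchAlong_apply (u : E) (s : ℝ) (y : E) :
    stretchAlong u s y = y + ((s - 1) * ⟪u, y⟫_ℝ) • u := by
  simp [stretchAlong, smul_smul, mul_comm]

theorem det_stretchAlong [FiniteDimensional ℝ E] {u : E} (hu : ‖u‖ = 1) (s : ℝ) :
    LinearMap.det (stretchAlong u s : E →ₗ[ℝ] E) = s := by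
  rw [stretchAlong, det_one_add_rankOne, real_inner_smul_right, real_inner_self_eq_norm_sq, hu]
  ring

theorem norm_stretchAlong_sq {u : E} (hu : ‖u‖ = 1) (s : ℝ) (y : E) :
    ‖stretchAlong u s y‖ ^ 2 = ‖y‖ ^ 2 + (s ^ 2 - 1) * ⟪u, y⟫_ℝ ^ 2 := by
  rw [stretchAlong_apply, norm_add_sq_real, norm_smul, real_inner_smul_right, real_inner_comm,
    hu, Real.norm_eq_abs, mul_one, sq_abs]
  ring

theorem norm_stretchAlong_sub_sq {u : E} (hu : ‖u‖ = 1) {s ρ : ℝ} (hs : s ≠ 0)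
    (hsρ : s ^ 2 + ρ ^ 2 = 1) (η : E) :
    ‖stretchAlong u s (η - (ρ / s ^ 2) • u)‖ ^ 2 =
      ‖η‖ ^ 2 - (1 + ρ * ⟪u, η⟫_ℝ) ^ 2 + (s ^ 2)⁻¹ := by
  rw [norm_stretchAlong_sq hu, norm_sub_sq_real, inner_sub_right, real_inner_smul_right,
    real_inner_smul_right, real_inner_self_eq_norm_sq, norm_smul, hu, real_inner_comm]
  simp only [Real.norm_eq_abs, mul_one, one_pow, sq_abs]
  field_simp
  linear_combination
    ((⟪u, η⟫_ℝ * s ^ 2 - ρ) ^ 2 + 2 * ρ * ⟪u, η⟫_ℝ * s ^ 2 + s ^ 2 - ρ ^ 2) * hsρ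

theorem norm_le_one_add_inner_iff {u : E} (hu : ‖u‖ = 1) {s ρ : ℝ} (hs : 0 < s)
    (hsρ : s ^ 2 + ρ ^ 2 = 1) (η : E) :
    ‖η‖ ≤ 1 + ⟪η, ρ • u⟫_ℝ ↔ ‖stretchAlong u s (η - (ρ / s ^ 2) • u)‖ ≤ s⁻¹ := by
  have ht : |⟪u, η⟫_ℝ| ≤ ‖η‖ := by simpa [hu] using abs_real_inner_le_norm u η
  have hρ : |ρ| < 1 := by
    rw [← abs_one, ← sq_lt_sq]
    nlinarith
  have hsq : ‖stretchAlong u s (η - (ρ / s ^ 2) • u)‖ ≤ s⁻¹ ↔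
      ‖η‖ ^ 2 ≤ (1 + ρ * ⟪u, η⟫_ℝ) ^ 2 := by
    rw [← sq_le_sq₀ (norm_nonneg _) (inv_nonneg.mpr hs.le), norm_stretchAlong_sub_sq hu hs.ne' hsρ,
      inv_pow, add_le_iff_nonpos_left, sub_nonpos]
  rw [real_inner_smul_right, real_inner_comm, hsq]
  refine ⟨fun h => pow_le_pow_left₀ (norm_nonneg η) h 2, fun h => ?_⟩
  have hpos : 0 ≤ 1 + ρ * ⟪u, η⟫_ℝ := by
    by_contra! hneg
    have h1 : ‖η‖ ≤ -(1 + ρ * ⟪u, η⟫_ℝ) := by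
      simpa [abs_of_neg hneg] using sq_le_sq.mp h
    have h2 : |ρ * ⟪u, η⟫_ℝ| ≤ ‖η‖ := by
      simpa [abs_mul] using mul_le_mul hρ.le ht (abs_nonneg _) zero_le_one
    linarith [neg_abs_le (ρ * ⟪u, η⟫_ℝ)]
  exact le_of_sq_le_sq h hpos

def polarBody (K : Set E) (z : E) : Set E := {ξ | ∀ x ∈ K, ⟪ξ, x - z⟫_ℝ ≤ 1}

theorem polarBody_closedBall (w : E) :
    polarBody (closedBall 0 1) w = {η | ‖η‖ ≤ 1 + ⟪η, w⟫_ℝ} := by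
  ext η
  simp only [polarBody, mem_closedBall_zero_iff, Set.mem_ofPred_eq, inner_sub_right]
  constructor
  · intro h
    rcases eq_or_ne η 0 with rfl | hη
    · simp
    have hη' : 0 < ‖η‖ := norm_pos_iff.mpr hη
    have := h (‖η‖⁻¹ • η) (by rw [norm_smul, norm_inv, norm_norm, inv_mul_cancel₀ hη'.ne'])
    rw [real_inner_smul_right, real_inner_self_eq_norm_sq, sq,
      inv_mul_cancel_left₀ hη'.ne'] at this
    linarith
  · intro h x hx
    have : ⟪η, x⟫_ℝ ≤ ‖η‖ :=
      (real_inner_le_norm η x).trans (mul_le_of_le_one_right (norm_nonneg η) hx)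
    linarith

theorem polarBody_preimage [FiniteDimensional ℝ E] {T : E →ₗ[ℝ] E} (hT : IsUnit T)
    (K : Set E) (z : E) :
    polarBody (T ⁻¹' K) z = LinearMap.adjoint T '' polarBody K (T z) := by
  have hT' : Function.Bijective (LinearMap.adjoint T) :=
    (Module.End.isUnit_iff _).mp (LinearMap.star_eq_adjoint T ▸ hT.star)
  ext ξ
  obtain ⟨η, rfl⟩ := hT'.surjective ξ
  rw [hT'.injective.mem_set_image]
  simp only [polarBody, Set.mem_preimage, Set.mem_ofPred_eq, LinearMap.adjoint_inner_left,
    map_sub]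
  refine ⟨fun h y hy => ?_, fun h x hx => h (T x) hx⟩
  obtain ⟨x, rfl⟩ := ((Module.End.isUnit_iff _).mp hT).surjective y
  exact h x hy

theorem addHaar_polarBody_closedBall_smul [FiniteDimensional ℝ E] [MeasurableSpace E]
    [BorelSpace E] (μ : Measure E) [μ.IsAddHaarMeasure] {u : E} (hu : ‖u‖ = 1) {ρ : ℝ}
    (hρ : |ρ| < 1) :
    μ (polarBody (closedBall 0 1) (ρ • u)) =
      μ (ball 0 1) / ENNReal.ofReal ((1 - ρ ^ 2) ^ (((Module.finrank ℝ E : ℝ) + 1) / 2)) := by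
  have hρ2 : ρ ^ 2 < 1 := by simpa using sq_lt_sq.mpr (hρ.trans_eq abs_one.symm)
  set s := √(1 - ρ ^ 2) with hs_def
  have hs : 0 < s := Real.sqrt_pos.mpr (by linarith)
  have hsρ : s ^ 2 + ρ ^ 2 = 1 := by
    rw [hs_def, Real.sq_sqrt (by linarith)]
    ring
  have hset : polarBody (closedBall 0 1) (ρ • u) = (· + -((ρ / s ^ 2) • u)) ⁻¹'
      ((stretchAlong u s : E →ₗ[ℝ] E) ⁻¹' closedBall 0 s⁻¹) := by
    ext η
    simp only [polarBody_closedBall, Set.mem_preimage, mem_closedBall_zero_iff,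
      ContinuousLinearMap.coe_coe, Set.mem_ofPred_eq, ← sub_eq_add_neg]
    exact norm_le_one_add_inner_iff hu hs hsρ η
  have hpow : (1 - ρ ^ 2) ^ (((Module.finrank ℝ E : ℝ) + 1) / 2) =
      s ^ (Module.finrank ℝ E + 1) := by
    rw [hs_def, Real.sqrt_eq_rpow, ← Real.rpow_natCast _ (Module.finrank ℝ E + 1),
      ← Real.rpow_mul (by linarith)]
    push_cast
    ring_nf
  rw [hset, measure_preimage_add_right, Measure.addHaar_preimage_linearMap μ
      (by rw [det_stretchAlong hu]; exact hs.ne'), det_stretchAlong hu,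
    Measure.addHaar_closedBall μ _ (inv_nonneg.mpr hs.le), hpow, ← mul_assoc,
    ← ENNReal.ofReal_mul (abs_nonneg _), abs_inv, abs_of_pos hs, ← pow_succ', inv_pow,
    ENNReal.ofReal_inv_of_pos (by positivity), div_eq_mul_inv, mul_comm]

end

open scoped ComplexOrder MatrixOrder in
theorem Matrix.PosDef.exists_isUnit_eq_conjTranspose_mul_self {𝕜 n : Type*} [RCLike 𝕜]
    [Fintype n] [DecidableEq n] {A : Matrix n n 𝕜} (hA : A.PosDef) :
    ∃ B : Matrix n n 𝕜, IsUnit B ∧ A = Bᴴ * B :=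
  CStarAlgebra.isStrictlyPositive_iff_eq_star_mul_self.mp hA.isStrictlyPositive

theorem Matrix.inner_toEuclideanLin_conjTranspose_mul_self {n : Type*} [Fintype n]
    [DecidableEq n] (B : Matrix n n ℝ) (x : EuclideanSpace ℝ n) :
    ⟪toEuclideanLin (Bᴴ * B) x, x⟫_ℝ = ‖toEuclideanLin B x‖ ^ 2 := by
  rw [toLpLin_mul_same, LinearMap.comp_apply, toEuclideanLin_conjTranspose_eq_adjoint,
    LinearMap.adjoint_inner_left, real_inner_self_eq_norm_sq]

theorem Matrix.sqrt_det_conjTranspose_mul_self {n : Type*} [Fintype n] [DecidableEq n]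
    (B : Matrix n n ℝ) : √(Bᴴ * B).det = |B.det| := by
  rw [det_mul, det_conjTranspose, star_trivial, Real.sqrt_mul_self_eq_abs]

/-- For a positive definite `A`, the ellipsoid `Q_A = {x : ⟨Ax,x⟩ ≤ 1}`, a boundary point
`p` (so `⟨Ap,p⟩ = 1`) and `0 < ρ < 1`, the volume of the dual body of `Q_A` with respect
to `ρ p` equals `ω_n √(det A) / (1 - ρ²)^{(n+1)/2}`, where `ω_n` is the volume of the
Euclidean unit ball. -/
theorem ellipsoid_dual_volume {n : ℕ} (A : Matrix (Fin n) (Fin n) ℝ) (hA : A.PosDef)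
    (p : EuclideanSpace ℝ (Fin n)) (hp : ⟪(Matrix.toEuclideanLin A) p, p⟫_ℝ = 1)
    (ρ : ℝ) (hρ0 : 0 < ρ) (hρ1 : ρ < 1) :
    (MeasureTheory.volume {ξ : EuclideanSpace ℝ (Fin n) |
        ∀ x : EuclideanSpace ℝ (Fin n), ⟪(Matrix.toEuclideanLin A) x, x⟫_ℝ ≤ 1 →
          ⟪ξ, x - ρ • p⟫_ℝ ≤ 1}).toReal =
      (MeasureTheory.volume (Metric.ball (0 : EuclideanSpace ℝ (Fin n)) 1)).toReal *
        Real.sqrt A.det / (1 - ρ^2) ^ (((n : ℝ) + 1)/2) := by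
  obtain ⟨B, hB, rfl⟩ := hA.exists_isUnit_eq_conjTranspose_mul_self
  set T := toEuclideanLin B
  have hT : IsUnit T := hB.map (toLpLinAlgEquiv 2)
  have hTp : ‖T p‖ = 1 := by
    rw [inner_toEuclideanLin_conjTranspose_mul_self] at hp
    exact (pow_eq_one_iff_of_nonneg (norm_nonneg _) two_ne_zero).mp hp
  have hset : {ξ : EuclideanSpace ℝ (Fin n) | ∀ x, ⟪toEuclideanLin (Bᴴ * B) x, x⟫_ℝ ≤ 1 →
      ⟪ξ, x - ρ • p⟫_ℝ ≤ 1} = LinearMap.adjoint T '' polarBody (closedBall 0 1) (ρ • T p) := by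
    rw [← map_smul, ← polarBody_preimage hT]
    simp only [polarBody, Set.mem_preimage, mem_closedBall_zero_iff,
      inner_toEuclideanLin_conjTranspose_mul_self, sq_le_one_iff₀ (norm_nonneg _)]
    rfl
  rw [hset, Measure.addHaar_image_linearMap,
    addHaar_polarBody_closedBall_smul volume hTp (abs_lt.mpr ⟨by linarith, hρ1⟩),
    ← toEuclideanLin_conjTranspose_eq_adjoint, LinearMap.det_toLpLin, det_conjTranspose,
    star_trivial, sqrt_det_conjTranspose_mul_self, finrank_euclideanSpace_fin,
    ENNReal.toReal_mul, ENNReal.toReal_div, ENNReal.toReal_ofReal (abs_nonneg _),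
    ENNReal.toReal_ofReal (Real.rpow_nonneg (by nlinarith) _)]
  ring
end

section
/- For an ellipsoid defined by a positive definite matrix A and a boundary point p with ⟨Ap,p⟩ = 1, one has det A = k_p / ⟨p, ν_p⟩^{n+1}, where k_p is the Gaussian curvature of the boundary at p and ν_p = Ap/|Ap| is the outward unit normal. -/
/-!
Write `q = Ap` and `T = qᗮ`, the tangent space. Complete an orthonormal basis `(bᵢ)` of `T`
by `q / ‖q‖` to an orthonormal basis of the whole space and compare it with the family
`(bᵢ, p)`. In the orthonormal basis, the coordinates of `A ∘ (bᵢ, p)` and of `(bᵢ, p)` are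
block triangular because `Ap = q` is orthogonal to `T`; their determinants are
`det(A|_T) ‖q‖` and `⟨p, q⟩ / ‖q‖`, where `A|_T` is the compression of `A` to `T`. Hence
`det A ⟨p, q⟩ = det(A|_T) ‖q‖²`. With `⟨Ap, p⟩ = 1`, the shape operator `‖q‖⁻¹ A|_T` on the
`(n - 1)`-dimensional space `T` and `⟨p, ν_p⟩ = ‖q‖⁻¹`, this is the claimed identity.
-/
open scoped InnerProductSpace

/-- The shape operator of the ellipsoid `{x : ⟨Ax,x⟩ ≤ 1}` at a boundary point `p`:
the differential of the Gauss map `x ↦ Ax/|Ax|` restricted to the tangent space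
`T_p = (span Ap)ᗮ`, namely `v ↦ |Ap|⁻¹ ⬝ proj_{T_p}(Av)`. -/
noncomputable def shapeOperator {n : ℕ} (A : Matrix (Fin n) (Fin n) ℝ)
    (p : EuclideanSpace ℝ (Fin n)) :
    ↥((Submodule.span ℝ {(Matrix.toEuclideanLin A) p})ᗮ) →ₗ[ℝ]
      ↥((Submodule.span ℝ {(Matrix.toEuclideanLin A) p})ᗮ) :=
  ‖(Matrix.toEuclideanLin A) p‖⁻¹ •
    ((Submodule.orthogonalProjection ((Submodule.span ℝ {(Matrix.toEuclideanLin A) p})ᗮ)).toLinearMap.comp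
      (((Matrix.toEuclideanLin A)).comp
        ((Submodule.span ℝ {(Matrix.toEuclideanLin A) p})ᗮ).subtype))

variable {E ι : Type*} [NormedAddCommGroup E] [InnerProductSpace ℝ E]

noncomputable def LinearMap.compression (K : Submodule ℝ E) [K.HasOrthogonalProjection]
    (f : E →ₗ[ℝ] E) : K →ₗ[ℝ] K :=
  K.orthogonalProjectionOnto.toLinearMap ∘ₗ f ∘ₗ K.subtype

theorem LinearMap.inner_compression_apply (K : Submodule ℝ E) [K.HasOrthogonalProjection]
    (f : E →ₗ[ℝ] E) (x y : K) : ⟪(x : E), f.compression K y⟫_ℝ = ⟪(x : E), f y⟫_ℝ :=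
  Submodule.inner_orthogonalProjectionOnto_eq_of_mem_left x (f y)

variable [Fintype ι]

theorem OrthonormalBasis.toBasis_toMatrix_apply (w : OrthonormalBasis ι ℝ E) {κ : Type*}
    (v : κ → E) (i : ι) (j : κ) : w.toBasis.toMatrix v i j = ⟪w i, v j⟫_ℝ := by
  rw [Module.Basis.toMatrix_apply, OrthonormalBasis.coe_toBasis_repr_apply,
    OrthonormalBasis.repr_apply_apply]

theorem orthonormal_sumElim_orthogonalSpanSingleton {q : E} (hq : q ≠ 0)
    (b : OrthonormalBasis ι ℝ (ℝ ∙ q)ᗮ) :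
    Orthonormal ℝ (Sum.elim (fun i => (b i : E)) fun _ : Unit => ‖q‖⁻¹ • q) := by
  have hperp : ∀ i, ⟪(b i : E), ‖q‖⁻¹ • q⟫_ℝ = 0 := fun i => by
    rw [real_inner_smul_right, Submodule.inner_left_of_mem_orthogonal
      (Submodule.mem_span_singleton_self q) (b i).2, mul_zero]
  refine ⟨?_, ?_⟩
  · rintro (i | i)
    · exact b.orthonormal.1 i
    · simp [norm_smul, hq]
  · rintro (i | i) (j | j) hij
    · simpa using b.orthonormal.2 (fun h => hij (congrArg _ h))
    · exact hperp i
    · simpa [real_inner_comm] using hperp j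
    · exact absurd rfl hij

variable [FiniteDimensional ℝ E]

theorem finrank_orthogonal_span_singleton_add_one {v : E} (hv : v ≠ 0) :
    Module.finrank ℝ (ℝ ∙ v)ᗮ + 1 = Module.finrank ℝ E := by
  rw [← finrank_span_singleton (K := ℝ) hv, add_comm]
  exact Submodule.finrank_add_finrank_orthogonal _

noncomputable def OrthonormalBasis.extendOrthogonalSpanSingleton {q : E} (hq : q ≠ 0)
    (b : OrthonormalBasis ι ℝ (ℝ ∙ q)ᗮ) : OrthonormalBasis (ι ⊕ Unit) ℝ E :=
  (basisOfOrthonormalOfCardEqFinrank (orthonormal_sumElim_orthogonalSpanSingleton hq b) (by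
    rw [Fintype.card_sum, Fintype.card_unit, ← Module.finrank_eq_card_basis b.toBasis,
      finrank_orthogonal_span_singleton_add_one hq])).toOrthonormalBasis
    (by rw [coe_basisOfOrthonormalOfCardEqFinrank]
        exact orthonormal_sumElim_orthogonalSpanSingleton hq b)

theorem OrthonormalBasis.coe_extendOrthogonalSpanSingleton {q : E} (hq : q ≠ 0)
    (b : OrthonormalBasis ι ℝ (ℝ ∙ q)ᗮ) :
    ⇑(b.extendOrthogonalSpanSingleton hq) =
      Sum.elim (fun i => (b i : E)) fun _ => ‖q‖⁻¹ • q := by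
  rw [extendOrthogonalSpanSingleton, Module.Basis.coe_toOrthonormalBasis,
    coe_basisOfOrthonormalOfCardEqFinrank]

section

variable [DecidableEq ι] {q : E} (hq : q ≠ 0) (b : OrthonormalBasis ι ℝ (ℝ ∙ q)ᗮ) (p : E)

theorem OrthonormalBasis.det_extendOrthogonalSpanSingleton_sumElim :
    (b.extendOrthogonalSpanSingleton hq).toBasis.det
      (Sum.elim (fun i => (b i : E)) fun _ : Unit => p) = ‖q‖⁻¹ * ⟪q, p⟫_ℝ := by
  have : (b.extendOrthogonalSpanSingleton hq).toBasis.toMatrix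
      (Sum.elim (fun i => (b i : E)) fun _ : Unit => p) =
        Matrix.fromBlocks 1 (Matrix.of fun i _ => ⟪(b i : E), p⟫_ℝ) 0
          (Matrix.of fun _ _ => ‖q‖⁻¹ * ⟪q, p⟫_ℝ) := by
    ext (i | i) (j | j) <;>
      simp only [toBasis_toMatrix_apply, coe_extendOrthogonalSpanSingleton, Sum.elim_inl,
        Sum.elim_inr, Matrix.fromBlocks_apply₁₁, Matrix.fromBlocks_apply₁₂,
        Matrix.fromBlocks_apply₂₁, Matrix.fromBlocks_apply₂₂, Matrix.of_apply, Matrix.zero_apply]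
    · exact (b.inner_eq_ite i j).trans (Matrix.one_apply ..).symm
    · rw [real_inner_smul_left, Submodule.inner_right_of_mem_orthogonal
        (Submodule.mem_span_singleton_self q) (b j).2, mul_zero]
    · rw [real_inner_smul_left]
  rw [Module.Basis.det_apply, this, Matrix.det_fromBlocks_zero₂₁, Matrix.det_one, one_mul,
    Matrix.det_unique, Matrix.of_apply]

theorem OrthonormalBasis.det_extendOrthogonalSpanSingleton_comp_sumElim (f : E →ₗ[ℝ] E)
    (hfp : f p = q) :
    (b.extendOrthogonalSpanSingleton hq).toBasis.det
      (f ∘ Sum.elim (fun i => (b i : E)) fun _ : Unit => p) =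
        LinearMap.det (f.compression (ℝ ∙ q)ᗮ) * ‖q‖ := by
  have : (b.extendOrthogonalSpanSingleton hq).toBasis.toMatrix
      (f ∘ Sum.elim (fun i => (b i : E)) fun _ : Unit => p) =
        Matrix.fromBlocks (LinearMap.toMatrix b.toBasis b.toBasis (f.compression (ℝ ∙ q)ᗮ)) 0
          (Matrix.of fun _ j => ⟪‖q‖⁻¹ • q, f (b j)⟫_ℝ) (Matrix.of fun _ _ => ‖q‖) := by
    ext (i | i) (j | j) <;>
      simp only [toBasis_toMatrix_apply, coe_extendOrthogonalSpanSingleton, Function.comp_apply,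
        Sum.elim_inl, Sum.elim_inr, Matrix.fromBlocks_apply₁₁, Matrix.fromBlocks_apply₁₂,
        Matrix.fromBlocks_apply₂₁, Matrix.fromBlocks_apply₂₂, Matrix.of_apply, Matrix.zero_apply]
    · rw [LinearMap.toMatrix_apply, b.coe_toBasis_repr_apply, b.repr_apply_apply, b.coe_toBasis,
        Submodule.coe_inner, LinearMap.inner_compression_apply]
    · rw [hfp, real_inner_comm, Submodule.inner_right_of_mem_orthogonal
        (Submodule.mem_span_singleton_self q) (b i).2]
    · rw [hfp, real_inner_smul_left, real_inner_self_eq_norm_sq]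
      field_simp [norm_ne_zero_iff.mpr hq]
  rw [Module.Basis.det_apply, this, Matrix.det_fromBlocks_zero₁₂, LinearMap.det_toMatrix,
    Matrix.det_unique, Matrix.of_apply]

end

theorem LinearMap.det_mul_inner_eq_det_compression_mul_norm_sq (f : E →ₗ[ℝ] E) {p q : E}
    (hfp : f p = q) :
    LinearMap.det f * ⟪q, p⟫_ℝ = LinearMap.det (f.compression (ℝ ∙ q)ᗮ) * ‖q‖ ^ 2 := by
  rcases eq_or_ne q 0 with hq | hq
  · simp [hq]
  let b := stdOrthonormalBasis ℝ (ℝ ∙ q)ᗮ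
  have hdet := (b.extendOrthogonalSpanSingleton hq).toBasis.det_comp f
    (Sum.elim (fun i => (b i : E)) fun _ : Unit => p)
  rw [b.det_extendOrthogonalSpanSingleton_comp_sumElim hq p f hfp,
    b.det_extendOrthogonalSpanSingleton_sumElim hq p] at hdet
  field_simp [norm_ne_zero_iff.mpr hq] at hdet
  exact hdet.symm

theorem LinearMap.det_eq_det_smul_compression_div_inner_pow (f : E →ₗ[ℝ] E) {p : E}
    (hp : ⟪f p, p⟫_ℝ = 1) :
    LinearMap.det f = LinearMap.det (‖f p‖⁻¹ • f.compression (ℝ ∙ f p)ᗮ) /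
      ⟪p, ‖f p‖⁻¹ • f p⟫_ℝ ^ (Module.finrank ℝ E + 1) := by
  have hq : f p ≠ 0 := fun h => by simp [h] at hp
  have hkey := f.det_mul_inner_eq_det_compression_mul_norm_sq (p := p) rfl
  rw [hp, mul_one] at hkey
  rw [real_inner_smul_right, real_inner_comm, hp, mul_one, LinearMap.det_smul,
    ← finrank_orthogonal_span_singleton_add_one hq, hkey]
  simp only [inv_pow]
  field_simp [norm_ne_zero_iff.mpr hq]
  ring

theorem ellipsoid_det_eq_curvature_general {n : ℕ} (A : Matrix (Fin n) (Fin n) ℝ)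
    (p : EuclideanSpace ℝ (Fin n)) (hp : ⟪(Matrix.toEuclideanLin A) p, p⟫_ℝ = 1) :
    A.det = LinearMap.det (shapeOperator A p) /
      ⟪p, ‖(Matrix.toEuclideanLin A) p‖⁻¹ • (Matrix.toEuclideanLin A) p⟫_ℝ ^ (n + 1) := by
  rw [← LinearMap.det_toLpLin 2 A, LinearMap.det_eq_det_smul_compression_div_inner_pow _ hp,
    finrank_euclideanSpace_fin]
  rfl

/-- For an ellipsoid given by the positive definite matrix `A` and a boundary point `p`
(`⟨Ap,p⟩ = 1`), one has `det A = k_p / ⟨p, ν_p⟩^{n+1}`, where `k_p` is the Gaussian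
curvature (determinant of the shape operator) at `p` and `ν_p = Ap/|Ap|` is the outward
unit normal. -/
theorem ellipsoid_det_eq_curvature {n : ℕ} (A : Matrix (Fin n) (Fin n) ℝ) (hA : A.PosDef)
    (p : EuclideanSpace ℝ (Fin n)) (hp : ⟪(Matrix.toEuclideanLin A) p, p⟫_ℝ = 1) :
    A.det = LinearMap.det (shapeOperator A p) /
      ⟪p, ‖(Matrix.toEuclideanLin A) p‖⁻¹ • (Matrix.toEuclideanLin A) p⟫_ℝ ^ (n + 1) :=
  ellipsoid_det_eq_curvature_general A p hp
end
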